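/- Let n, k be positive integers with n ≡ k (mod 2), 1 ≤ k ≤ n−2, and let α be a real number with 0 ≤ α < 1. Then the A_α-spectral radius of the graph K_{(n−k)/2} ∨ \overline{K_{(n+k)/2}} equals (n−k−2+2αn)/4 + √((n−k−2+2αn)² + 4(n²−k²) − 4α(3n+k−2)(n−k))/4; in particular it is strictly greater than (n−k−2)/2. -/

import Mathlib

open scoped Classical

/-- The largest eigenvalue of a real square matrix. -/
noncomputable def maxEigenvalue {V : Type*} [Fintype V] (M : Matrix V V ℝ) : ℝ :=
  sSup {t : ℝ | Module.End.HasEigenvalue (Matrix.toLin' M) t}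

/-- The `A_α`-matrix `α•D(G) + (1-α)•A(G)` of a graph. -/
noncomputable def AalphaMatrix {V : Type*} [Fintype V] (α : ℝ) (G : SimpleGraph V) :
    Matrix V V ℝ :=
  α • Matrix.diagonal (fun v => (G.degree v : ℝ)) + (1 - α) • G.adjMatrix ℝ

/-- The `A_α`-spectral radius of a graph: the largest eigenvalue of its `A_α`-matrix. -/
noncomputable def rhoAlpha {V : Type*} [Fintype V] (α : ℝ) (G : SimpleGraph V) : ℝ :=
  maxEigenvalue (AalphaMatrix α G)

/-- The graph `K_m ∨ (K_{n-m})ᶜ` on `Fin n`: the first `m` vertices form a clique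
joined to everything and the remaining `n-m` vertices form an independent set. -/
def splitGraph (n m : ℕ) : SimpleGraph (Fin n) where
  Adj u v := u ≠ v ∧ ((u : ℕ) < m ∨ (v : ℕ) < m)
  symm := by
    constructor
    rintro u v ⟨h1, h2⟩
    exact ⟨h1.symm, by tauto⟩
  loopless := by
    constructor
    rintro u ⟨h, -⟩
    exact h rfl

/-!
The vector equal to `x` on the clique `K_m` and to `y` on the independent set is mapped by `A_α`
to a vector of the same shape, so eigenvectors of the `2 × 2` quotient matrix lift to
eigenvectors of `A_α`. The larger root `ρ` of its characteristic polynomial has a positive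
eigenvector, and since `A_α` is entrywise nonnegative (for `0 ≤ α ≤ 1`), a positive eigenvector
belongs to the largest eigenvalue. With `m = (n-k)/2` this `ρ` is the stated closed form, and it
exceeds the diagonal entry `m - 1 + α(n-m) ≥ (n-k-2)/2` of the quotient matrix.
-/

open Matrix Module.End Finset

section PositiveEigenvector

variable {V : Type*} [Fintype V] {M : Matrix V V ℝ} {z : V → ℝ} {ρ : ℝ}

/-- Collatz–Wielandt bound: compare `w` with the multiple `c • z` that touches it from above,
at a coordinate where they touch. -/
lemma le_of_mulVec_eq_smul_of_pos (hM : ∀ u v, 0 ≤ M u v) (hz : ∀ v, 0 < z v)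
    (hMz : M *ᵥ z = ρ • z) {w : V → ℝ} {t : ℝ} (hMw : M *ᵥ w = t • w) {u : V} (hu : 0 < w u) :
    t ≤ ρ := by
  obtain ⟨u₀, -, hmax⟩ := exists_max_image univ (fun v => w v / z v) ⟨u, mem_univ u⟩
  set c := w u₀ / z u₀
  have hc : 0 < c := (div_pos hu (hz u)).trans_le (hmax u (mem_univ u))
  have hw_le (v : V) : w v ≤ c * z v := (div_le_iff₀ (hz v)).mp (hmax v (mem_univ v))
  have hwu₀ : w u₀ = c * z u₀ := (div_mul_cancel₀ _ (hz u₀).ne').symm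
  have key : t * (c * z u₀) ≤ ρ * (c * z u₀) :=
    calc t * (c * z u₀) = (M *ᵥ w) u₀ := by rw [hMw, Pi.smul_apply, smul_eq_mul, hwu₀]
      _ ≤ (M *ᵥ (c • z)) u₀ := by
        simp only [mulVec, dotProduct, Pi.smul_apply, smul_eq_mul]
        exact sum_le_sum fun v _ => mul_le_mul_of_nonneg_left (hw_le v) (hM u₀ v)
      _ = ρ * (c * z u₀) := by
        rw [mulVec_smul, hMz, Pi.smul_apply, Pi.smul_apply, smul_eq_mul, smul_eq_mul]; ring
  exact le_of_mul_le_mul_right key (mul_pos hc (hz u₀))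

lemma eigenvalue_le_of_pos_eigenvector (hM : ∀ u v, 0 ≤ M u v) (hz : ∀ v, 0 < z v)
    (hMz : M *ᵥ z = ρ • z) {t : ℝ} (ht : HasEigenvalue (toLin' M) t) : t ≤ ρ := by
  obtain ⟨w, hMw, hw⟩ : ∃ w, M *ᵥ w = t • w ∧ w ≠ 0 := by
    simpa [hasEigenvector_iff] using ht.exists_hasEigenvector
  obtain ⟨u, hu⟩ := Function.ne_iff.mp hw
  rcases hu.lt_or_gt with hneg | hpos
  · refine le_of_mulVec_eq_smul_of_pos hM hz hMz (w := -w) ?_ (u := u) (by simpa using hneg)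
    rw [mulVec_neg, hMw, smul_neg]
  · exact le_of_mulVec_eq_smul_of_pos hM hz hMz hMw hpos

lemma maxEigenvalue_eq_of_pos_eigenvector [Nonempty V] (hM : ∀ u v, 0 ≤ M u v)
    (hz : ∀ v, 0 < z v) (hMz : M *ᵥ z = ρ • z) : maxEigenvalue M = ρ := by
  have hρ : HasEigenvalue (toLin' M) ρ := by
    refine hasEigenvalue_of_hasEigenvector (x := z) ⟨?_, fun h => ?_⟩
    · rw [mem_eigenspace_iff, toLin'_apply, hMz]
    · exact (hz (Classical.arbitrary V)).ne' (congrFun h _)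
  have hle : ∀ t ∈ {t : ℝ | HasEigenvalue (toLin' M) t}, t ≤ ρ :=
    fun _ ht => eigenvalue_le_of_pos_eigenvector hM hz hMz ht
  exact le_antisymm (csSup_le ⟨ρ, hρ⟩ hle) (le_csSup ⟨ρ, hle⟩ hρ)

end PositiveEigenvector

section AalphaMatrix

variable {V : Type*} [Fintype V] {α : ℝ}

lemma AalphaMatrix_nonneg (hα0 : 0 ≤ α) (hα1 : α ≤ 1) (G : SimpleGraph V) (u v : V) :
    0 ≤ AalphaMatrix α G u v := by
  have hD : 0 ≤ diagonal (fun v => (G.degree v : ℝ)) u v := by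
    rw [diagonal_apply]; split <;> positivity
  have hA : 0 ≤ G.adjMatrix ℝ u v := by
    rw [SimpleGraph.adjMatrix_apply]; split <;> norm_num
  simp only [AalphaMatrix, Matrix.add_apply, Matrix.smul_apply, smul_eq_mul]
  exact add_nonneg (mul_nonneg hα0 hD) (mul_nonneg (sub_nonneg.mpr hα1) hA)

lemma AalphaMatrix_mulVec_apply (G : SimpleGraph V) (z : V → ℝ) (u : V) :
    (AalphaMatrix α G *ᵥ z) u
      = α * (#(G.neighborFinset u) * z u) + (1 - α) * ∑ w ∈ G.neighborFinset u, z w := by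
  simp [AalphaMatrix, add_mulVec, smul_mulVec, mulVec_diagonal,
    SimpleGraph.adjMatrix_mulVec_apply]

end AalphaMatrix

section SplitGraph

variable {n m : ℕ}

def blockVector (m : ℕ) (x y : ℝ) : Fin n → ℝ := fun v => if (v : ℕ) < m then x else y

lemma blockVector_of_lt {v : Fin n} (hv : (v : ℕ) < m) (x y : ℝ) : blockVector m x y v = x :=
  if_pos hv

lemma blockVector_of_le {v : Fin n} (hv : m ≤ (v : ℕ)) (x y : ℝ) : blockVector m x y v = y :=
  if_neg (not_lt.mpr hv)

lemma smul_blockVector (c x y : ℝ) :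
    c • blockVector (n := n) m x y = blockVector m (c * x) (c * y) := by
  ext v
  simp only [blockVector, Pi.smul_apply, smul_eq_mul, mul_ite]

lemma card_filter_lt_of_le (hmn : m ≤ n) : #{v : Fin n | (v : ℕ) < m} = m := by
  rw [Fin.card_filter_val_lt, min_eq_right hmn]

lemma sum_blockVector (hmn : m ≤ n) (x y : ℝ) :
    ∑ v, blockVector (n := n) m x y v = m * x + (n - m) * y := by
  have hcard : #{v : Fin n | ¬ (v : ℕ) < m} = n - m := by
    rw [filter_not, card_sdiff_of_subset (filter_subset _ _), card_filter_lt_of_le hmn,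
      card_univ, Fintype.card_fin]
  simp only [blockVector, sum_ite, sum_const, card_filter_lt_of_le hmn, hcard, nsmul_eq_mul,
    Nat.cast_sub hmn]

lemma splitGraph_neighborFinset_of_lt {u : Fin n} (hu : (u : ℕ) < m) :
    (splitGraph n m).neighborFinset u = univ.erase u := by
  ext v
  simp only [SimpleGraph.mem_neighborFinset, mem_erase, mem_univ, and_true]
  exact ⟨fun h => h.1.symm, fun h => ⟨h.symm, Or.inl hu⟩⟩

lemma splitGraph_neighborFinset_of_le {u : Fin n} (hu : m ≤ (u : ℕ)) :
    (splitGraph n m).neighborFinset u = ({v | (v : ℕ) < m} : Finset (Fin n)) := by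
  ext v
  simp only [SimpleGraph.mem_neighborFinset, mem_filter, mem_univ, true_and]
  refine ⟨fun h => h.2.resolve_left (not_lt.mpr hu), fun h => ⟨?_, Or.inr h⟩⟩
  rintro rfl
  exact absurd h (not_lt.mpr hu)

/-- The two parts of `splitGraph n m` form an equitable partition with quotient matrix
`[[α(n-1) + (1-α)(m-1), (1-α)(n-m)], [(1-α)m, αm]]`. -/
lemma AalphaMatrix_splitGraph_mulVec_blockVector (hmn : m ≤ n) (α x y : ℝ) :
    AalphaMatrix α (splitGraph n m) *ᵥ blockVector m x y =
      blockVector m ((α * (n - 1) + (1 - α) * (m - 1)) * x + (1 - α) * (n - m) * y)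
        ((1 - α) * m * x + α * m * y) := by
  ext u
  rw [AalphaMatrix_mulVec_apply]
  rcases lt_or_ge (u : ℕ) m with hu | hu
  · have hn : 1 ≤ n := by omega
    rw [splitGraph_neighborFinset_of_lt hu, card_erase_of_mem (mem_univ u), card_univ,
      Fintype.card_fin, sum_erase_eq_sub (mem_univ u), sum_blockVector hmn, Nat.cast_sub hn,
      Nat.cast_one]
    rw [blockVector_of_lt hu, blockVector_of_lt hu]
    ring
  · have hsum : ∑ v ∈ {v : Fin n | (v : ℕ) < m}, blockVector m x y v = m * x := by
      rw [sum_congr rfl fun v hv => blockVector_of_lt (mem_filter.mp hv).2 x y, sum_const,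
        card_filter_lt_of_le hmn, nsmul_eq_mul]
    rw [splitGraph_neighborFinset_of_le hu, hsum, card_filter_lt_of_le hmn]
    rw [blockVector_of_le hu, blockVector_of_le hu]
    ring

end SplitGraph

/-- The larger root of `(r - a) (r - d) = b`, i.e. the larger eigenvalue of a real `2 × 2`
matrix with diagonal `a, d` and product of off-diagonal entries `b`. -/
noncomputable def largerRoot (a d b : ℝ) : ℝ := (a + d) / 2 + √((a - d) ^ 2 + 4 * b) / 2

lemma largerRoot_sub_mul_sub {a d b : ℝ} (hb : 0 ≤ b) :
    (largerRoot a d b - a) * (largerRoot a d b - d) = b := by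
  have hsq := Real.sq_sqrt (by positivity : 0 ≤ (a - d) ^ 2 + 4 * b)
  unfold largerRoot
  linear_combination hsq / 4

lemma lt_largerRoot {a d b : ℝ} (hb : 0 < b) : a < largerRoot a d b := by
  have : a - d < √((a - d) ^ 2 + 4 * b) :=
    (le_abs_self _).trans_lt <| by
      rw [← Real.sqrt_sq_eq_abs]
      exact Real.sqrt_lt_sqrt (sq_nonneg _) (by linarith)
  unfold largerRoot
  linarith

theorem rhoAlpha_splitGraph {n m : ℕ} (hm : 0 < m) (hmn : m < n) {α : ℝ} (hα0 : 0 ≤ α)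
    (hα1 : α < 1) :
    rhoAlpha α (splitGraph n m) =
      largerRoot (α * (n - 1) + (1 - α) * (m - 1)) (α * m) ((1 - α) ^ 2 * m * (n - m)) := by
  have : Nonempty (Fin n) := ⟨⟨0, by omega⟩⟩
  have hm' : (0 : ℝ) < m := by exact_mod_cast hm
  have hnm : (0 : ℝ) < n - m := sub_pos.mpr (by exact_mod_cast hmn)
  have hα : 0 < 1 - α := sub_pos.mpr hα1
  set a := α * (n - 1) + (1 - α) * (m - 1)
  set ρ := largerRoot a (α * m) ((1 - α) ^ 2 * m * (n - m))
  have hρa : a < ρ := lt_largerRoot (by positivity)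
  have hquad : (ρ - a) * (ρ - α * m) = (1 - α) ^ 2 * m * (n - m) :=
    largerRoot_sub_mul_sub (by positivity)
  -- `((1-α)(n-m), ρ-a)` is the Perron eigenvector of the quotient matrix
  refine maxEigenvalue_eq_of_pos_eigenvector (AalphaMatrix_nonneg hα0 hα1.le _)
    (z := blockVector m ((1 - α) * (n - m)) (ρ - a)) ?_ ?_
  · intro v
    unfold blockVector
    split
    · positivity
    · linarith
  · rw [AalphaMatrix_splitGraph_mulVec_blockVector hmn.le, smul_blockVector]
    congr 1
    · ring
    · linear_combination -hquad

theorem stmt_15_general (n k : ℕ) (hkn : k + 2 ≤ n) (hmod : n % 2 = k % 2)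
    (α : ℝ) (hα0 : 0 ≤ α) (hα1 : α < 1) :
    rhoAlpha α (splitGraph n ((n - k) / 2)) =
        ((n : ℝ) - k - 2 + 2*α*n) / 4 +
          Real.sqrt (((n : ℝ) - k - 2 + 2*α*n)^2 + 4*((n : ℝ)^2 - (k : ℝ)^2)
            - 4*α*(3*(n : ℝ) + k - 2)*((n : ℝ) - k)) / 4 ∧
      ((n : ℝ) - k - 2) / 2 < rhoAlpha α (splitGraph n ((n - k) / 2)) := by
  set m := (n - k) / 2
  have hm : (m : ℝ) = (n - k) / 2 := by
    rw [eq_div_iff two_ne_zero, ← Nat.cast_sub (by omega), ← Nat.cast_ofNat, ← Nat.cast_mul]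
    congr 1
    omega
  have hm0 : (0 : ℝ) < m := by rw [hm]; linarith [(show (k : ℝ) + 2 ≤ n by exact_mod_cast hkn)]
  have hmn : (0 : ℝ) < n - m := by rw [hm]; linarith [(show (0 : ℝ) ≤ k by positivity)]
  rw [rhoAlpha_splitGraph (by omega) (by omega) hα0 hα1]
  refine ⟨?_, lt_of_le_of_lt ?_ (lt_largerRoot ?_)⟩
  · have hsqrt (x : ℝ) : √x / 2 = √(4 * x) / 4 := by
      rw [Real.sqrt_mul zero_le_four, show (4 : ℝ) = 2 ^ 2 by norm_num, Real.sqrt_sq zero_le_two]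
      ring
    rw [largerRoot, hsqrt, hm]
    ring_nf
  · linarith [mul_nonneg hα0 hmn.le]
  · exact mul_pos (mul_pos (pow_pos (sub_pos.mpr hα1) 2) hm0) hmn

theorem stmt_15 (n k : ℕ) (hk1 : 1 ≤ k) (hkn : k + 2 ≤ n) (hmod : n % 2 = k % 2)
    (α : ℝ) (hα0 : 0 ≤ α) (hα1 : α < 1) :
    rhoAlpha α (splitGraph n ((n - k) / 2)) =
        ((n : ℝ) - k - 2 + 2*α*n) / 4 +
          Real.sqrt (((n : ℝ) - k - 2 + 2*α*n)^2 + 4*((n : ℝ)^2 - (k : ℝ)^2)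
            - 4*α*(3*(n : ℝ) + k - 2)*((n : ℝ) - k)) / 4 ∧
      ((n : ℝ) - k - 2) / 2 < rhoAlpha α (splitGraph n ((n - k) / 2)) :=
  stmt_15_general n k hkn hmod α hα0 hα1
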